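/- If X has FTG distribution with parameters α ∈ ℝ, θ > 0, ρ > 0, then E[X] = (α - ρ + μ)/θ, where μ = e^{-ρ} ρ^α / Γ(α,ρ). -/

import Mathlib

open MeasureTheory Real Filter Set

noncomputable def uGamma (a r : ℝ) : ℝ := ∫ t in Set.Ioi r, t ^ (a - 1) * Real.exp (-t)

noncomputable def ftg (a θ ρ x : ℝ) : ℝ :=
  θ * (ρ + θ * x) ^ (a - 1) * Real.exp (-(ρ + θ * x)) / uGamma a ρ

noncomputable def pareto (a σ x : ℝ) : ℝ := -a * σ⁻¹ * (1 + x / σ) ^ (a - 1)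

/-!
The substitution `t = ρ + θ x` turns the mean into
`θ⁻¹ ∫_{t > ρ} (t - ρ) t^(α-1) e^(-t) dt / Γ(α, ρ)`. Integrating by parts gives the recurrence
`Γ(α + 1, ρ) = α Γ(α, ρ) + ρ^α e^(-ρ)`, so this integral is `(α - ρ) Γ(α, ρ) + ρ^α e^(-ρ)`.
-/

theorem integral_comp_add_mul_Ioi {E : Type*} [NormedAddCommGroup E] [NormedSpace ℝ E]
    (g : ℝ → E) (a c : ℝ) {b : ℝ} (hb : 0 < b) :
    ∫ x in Ioi a, g (c + b * x) = b⁻¹ • ∫ x in Ioi (c + b * a), g x := by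
  rw [integral_comp_mul_left_Ioi (fun y => g (c + y)) a hb,
    ← (measurePreserving_add_left volume c).setIntegral_preimage_emb
      (measurableEmbedding_addLeft c) g (Ioi (c + b * a)),
    preimage_const_add_Ioi, add_sub_cancel_left]

theorem integrableOn_rpow_mul_exp_neg_Ioi (s : ℝ) {ρ : ℝ} (hρ : 0 < ρ) :
    IntegrableOn (fun t : ℝ => t ^ s * exp (-t)) (Ioi ρ) :=
  integrable_of_isBigO_exp_neg one_half_pos
    ((continuousOn_id.rpow_const fun t ht => Or.inl (hρ.trans_le ht).ne').mul
      continuousOn_id.neg.rexp)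
    (by simpa only [mul_comm] using (Gamma_integrand_isLittleO s).isBigO)

theorem uGamma_pos (a : ℝ) {ρ : ℝ} (hρ : 0 < ρ) : 0 < uGamma a ρ := by
  have hpos : ∀ t ∈ Ioi ρ, 0 < t ^ (a - 1) * exp (-t) := fun t ht =>
    mul_pos (rpow_pos_of_pos (hρ.trans ht) _) (exp_pos _)
  have hsupp : Ioi ρ ⊆ Function.support fun t : ℝ => t ^ (a - 1) * exp (-t) :=
    fun t ht => (hpos t ht).ne'
  rw [uGamma, setIntegral_pos_iff_support_of_nonneg_ae
    ((ae_restrict_mem measurableSet_Ioi).mono fun t ht => (hpos t ht).le)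
    (integrableOn_rpow_mul_exp_neg_Ioi _ hρ),
    inter_eq_right.mpr hsupp]
  simp

theorem uGamma_add_one (a : ℝ) {ρ : ℝ} (hρ : 0 < ρ) :
    uGamma (a + 1) ρ = a * uGamma a ρ + ρ ^ a * exp (-ρ) := by
  have hcont : ContinuousWithinAt (fun t : ℝ => -(t ^ a * exp (-t))) (Ici ρ) ρ :=
    ((continuousAt_rpow_const ρ a (Or.inl hρ.ne')).mul
      continuous_neg.rexp.continuousAt).neg.continuousWithinAt
  have hderiv : ∀ t ∈ Ioi ρ, HasDerivAt (fun t : ℝ => -(t ^ a * exp (-t)))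
      (t ^ a * exp (-t) - a * (t ^ (a - 1) * exp (-t))) t := fun t ht =>
    ((hasDerivAt_rpow_const (p := a) (Or.inl (hρ.trans ht).ne')).fun_mul
      (hasDerivAt_neg t).exp).fun_neg.congr_deriv (by ring)
  have hlim : Tendsto (fun t : ℝ => -(t ^ a * exp (-t))) atTop (nhds 0) := by
    simpa using (tendsto_rpow_mul_exp_neg_mul_atTop_nhds_zero a 1 one_pos).neg
  have hparts := integral_Ioi_of_hasDerivAt_of_tendsto hcont hderiv
    ((integrableOn_rpow_mul_exp_neg_Ioi a hρ).sub
      ((integrableOn_rpow_mul_exp_neg_Ioi (a - 1) hρ).const_mul a)) hlim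
  rw [integral_sub (integrableOn_rpow_mul_exp_neg_Ioi a hρ)
    ((integrableOn_rpow_mul_exp_neg_Ioi (a - 1) hρ).const_mul a), integral_const_mul] at hparts
  rw [uGamma, uGamma, add_sub_cancel_right]
  linarith

theorem integral_Ioi_sub_mul_rpow_mul_exp_neg (a : ℝ) {ρ : ℝ} (hρ : 0 < ρ) :
    ∫ t in Ioi ρ, (t - ρ) * (t ^ (a - 1) * exp (-t)) =
      (a - ρ) * uGamma a ρ + ρ ^ a * exp (-ρ) := by
  have hsplit : ∀ t ∈ Ioi ρ, (t - ρ) * (t ^ (a - 1) * exp (-t)) =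
      t ^ (a + 1 - 1) * exp (-t) - ρ * (t ^ (a - 1) * exp (-t)) := fun t ht => by
    rw [show a + 1 - 1 = a - 1 + 1 by ring, rpow_add_one (hρ.trans ht).ne']
    ring
  rw [setIntegral_congr_fun measurableSet_Ioi hsplit,
    integral_sub (integrableOn_rpow_mul_exp_neg_Ioi _ hρ)
      ((integrableOn_rpow_mul_exp_neg_Ioi _ hρ).const_mul ρ),
    integral_const_mul, ← uGamma, ← uGamma, uGamma_add_one a hρ]
  ring

theorem ftg_mean (α θ ρ : ℝ) (hθ : 0 < θ) (hρ : 0 < ρ) :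
    (∫ x in Set.Ioi (0:ℝ), x * ftg α θ ρ x) =
      (α - ρ + Real.exp (-ρ) * ρ ^ α / uGamma α ρ) / θ := by
  have hG := (uGamma_pos α hρ).ne'
  have hsubst : ∀ x, x * ftg α θ ρ x =
      (ρ + θ * x - ρ) * ((ρ + θ * x) ^ (α - 1) * exp (-(ρ + θ * x))) / uGamma α ρ := fun x => by
    rw [ftg]
    field_simp
    ring
  simp_rw [hsubst]
  rw [integral_comp_add_mul_Ioi (fun t => (t - ρ) * (t ^ (α - 1) * exp (-t)) / uGamma α ρ) 0 ρ hθ,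
    mul_zero, add_zero, integral_div, integral_Ioi_sub_mul_rpow_mul_exp_neg α hρ, smul_eq_mul]
  field_simp
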